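/- Define R-polynomials of words recursively by R_{u,∅}(q) = 1 if u = e, 0 otherwise, and R_{u,ws}(q) = R_{us,w}(q) if us < u, and R_{u,ws}(q) = q·R_{us,w}(q) + (q-1)·R_{u,w}(q) if us > u. Then for every word w and every u ∈ W, R_{u,w}(q) = Σ_{u ∈ D_{u,w}} (q-1)^{e_u} q^{d_u}, where the sum is over distinguished u-subwords of w, e_u is the number of skips and d_u = #{i : u_(i) < u_(i-1)}. -/

import Mathlib

/-!
Both sides satisfy the recursion defining `R_{u,ws}` in the last letter `s`. A subword of `ws`
is a subword of `w` together with a choice at `s`, and only the last partial product changes.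
If `s` is used, the rest is a `us`-subword of `w`, and the last step is a descent, contributing
a factor `q`, exactly when `us > u`. If `s` is skipped, the rest is a `u`-subword of `w`, the
skip contributes `q - 1`, and the subword is distinguished at `s` only when `us > u`.
-/

open scoped Classical

namespace Deodhar

variable {B : Type*} {W : Type*} [Group W] {M : CoxeterMatrix B}

/-- Given a word `w` in the simple-reflection indices and a subword-selector
`f : Fin w.length → Bool` (`f j = true` means the letter at position `j` is used,
`f j = false` means it is skipped, i.e. replaced by the identity `e`), the partial
product `u_(i) = u_1 ⋯ u_i` of the first `i` letters of the subword. -/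
noncomputable def pp (cs : CoxeterSystem M W) (w : List B) (f : Fin w.length → Bool)
    (i : ℕ) : W :=
  ((((List.finRange w.length).take i)).map
    (fun j => if f j then cs.simple (w.get j) else 1)).prod

/-- The full product of the subword. -/
noncomputable def sprod (cs : CoxeterSystem M W) (w : List B)
    (f : Fin w.length → Bool) : W :=
  pp cs w f w.length

/-- The subword selected by `f` is distinguished: for each position `j`,
`ℓ(u_(j+1)) ≤ ℓ(u_(j) · s_j)`, i.e. `u_(j+1) ≤ u_(j) s_j` in weak order. -/
def Distinguished (cs : CoxeterSystem M W) (w : List B) (f : Fin w.length → Bool) : Prop :=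
  ∀ j : Fin w.length,
    cs.length (pp cs w f ((j : ℕ) + 1)) ≤ cs.length (pp cs w f (j : ℕ) * cs.simple (w.get j))

/-- The number of skips `e_u = #{j : u_j = e}`. -/
def skips (w : List B) (f : Fin w.length → Bool) : ℕ :=
  (Finset.univ.filter (fun j : Fin w.length => f j = false)).card

/-- The number of descents `d_u = #{j : u_(j+1) < u_(j)}`. -/
noncomputable def descents (cs : CoxeterSystem M W) (w : List B)
    (f : Fin w.length → Bool) : ℕ :=
  (Finset.univ.filter (fun j : Fin w.length =>
    cs.length (pp cs w f ((j : ℕ) + 1)) < cs.length (pp cs w f (j : ℕ)))).card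

/-- The reflection `s_j^{u_(j)} = u_(j) s_j u_(j)⁻¹` associated to position `j`. -/
noncomputable def reflAt (cs : CoxeterSystem M W) (w : List B) (f : Fin w.length → Bool)
    (j : Fin w.length) : W :=
  pp cs w f (j : ℕ) * cs.simple (w.get j) * (pp cs w f (j : ℕ))⁻¹

/-- The color `k_j = #{i < j : u_i ≠ e and s_i^{u_(i)} = s_j^{u_(j)}}` of position `j`. -/
noncomputable def color (cs : CoxeterSystem M W) (w : List B) (f : Fin w.length → Bool)
    (j : Fin w.length) : ℕ :=
  (Finset.univ.filter (fun i : Fin w.length =>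
    (i : ℕ) < (j : ℕ) ∧ f i = true ∧ reflAt cs w f i = reflAt cs w f j)).card

end Deodhar

namespace Deodhar

/-- Auxiliary recursion for the `R`-polynomials, processing the word from the right
(the list argument is the reversed word): `R_{u,∅} = δ_{u,e}`; `R_{u,ws} = R_{us,w}` if
`us < u`, and `R_{u,ws} = q·R_{us,w} + (q-1)·R_{u,w}` if `us > u`. -/
noncomputable def Raux {B : Type*} {W : Type*} [Group W] {M : CoxeterMatrix B}
    (cs : CoxeterSystem M W) : List B → W → Polynomial ℤ
  | [], u => if u = 1 then 1 else 0
  | i :: rest, u =>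
    if cs.length (u * cs.simple i) < cs.length u then Raux cs rest (u * cs.simple i)
    else Polynomial.X * Raux cs rest (u * cs.simple i) +
      (Polynomial.X - 1) * Raux cs rest u

/-- The `R`-polynomial `R_{u,w}(q)` of a word `w` and an element `u`. -/
noncomputable def Rpol {B : Type*} {W : Type*} [Group W] {M : CoxeterMatrix B}
    (cs : CoxeterSystem M W) (w : List B) (u : W) : Polynomial ℤ :=
  Raux cs w.reverse u

end Deodhar

namespace Deodhar

open Polynomial

theorem forall_fin_iff_of_eq_add_one {m n : ℕ} (hm : m = n + 1) {p : Fin m → Prop} :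
    (∀ j, p j) ↔ (∀ j : Fin n, p ⟨j, by omega⟩) ∧ p ⟨n, by omega⟩ := by
  subst hm
  exact Fin.forall_fin_succ'

theorem card_filter_fin_of_eq_add_one {m n : ℕ} (hm : m = n + 1) (p : Fin m → Prop)
    [DecidablePred p] :
    (Finset.univ.filter p).card =
      (Finset.univ.filter fun j : Fin n => p ⟨j, by omega⟩).card +
        if p ⟨n, by omega⟩ then 1 else 0 := by
  subst hm
  rw [Finset.card_filter, Finset.card_filter, Fin.sum_univ_castSucc]
  rfl

variable {B : Type*} {W : Type*} [Group W] {M : CoxeterMatrix B} (cs : CoxeterSystem M W)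

theorem pp_zero (w : List B) (f : Fin w.length → Bool) : pp cs w f 0 = 1 := by
  simp [pp]

theorem pp_succ (w : List B) (f : Fin w.length → Bool) {i : ℕ} (hi : i < w.length) :
    pp cs w f (i + 1) =
      pp cs w f i * if f ⟨i, hi⟩ then cs.simple (w.get ⟨i, hi⟩) else 1 := by
  have hget : (List.finRange w.length)[i]? = some ⟨i, hi⟩ := by
    rw [List.getElem?_eq_getElem (by simpa using hi)]
    simp
  simp [pp, List.take_add_one, hget]

noncomputable def distinguishedTerm (w : List B) (u : W) (f : Fin w.length → Bool) : ℤ[X] :=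
  if Distinguished cs w f ∧ sprod cs w f = u then (X - 1) ^ skips w f * X ^ descents cs w f
  else 0

noncomputable def distinguishedSum (w : List B) (u : W) : ℤ[X] :=
  ∑ f, distinguishedTerm cs w u f

theorem distinguishedSum_nil (u : W) : distinguishedSum cs [] u = if u = 1 then 1 else 0 := by
  have hsprod (f : Fin [].length → Bool) : sprod cs [] f = 1 := rfl
  simp only [distinguishedSum, distinguishedTerm, Distinguished, hsprod, skips, descents]
  simp [eq_comm (a := u)]

section extendSel

variable {a : List B} {s : B}

def extendSel (f : Fin a.length → Bool) (b : Bool) : Fin (a ++ [s]).length → Bool :=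
  fun j => if h : (j : ℕ) < a.length then f ⟨j, h⟩ else b

theorem extendSel_apply_of_lt (f : Fin a.length → Bool) (b : Bool) {i : ℕ}
    (hi : i < a.length) : extendSel (s := s) f b ⟨i, by simp; omega⟩ = f ⟨i, hi⟩ := by
  simp [extendSel, hi]

theorem extendSel_apply_length (f : Fin a.length → Bool) (b : Bool) :
    extendSel (s := s) f b ⟨a.length, by simp⟩ = b := by
  simp [extendSel]

theorem sum_extendSel {A : Type*} [AddCommMonoid A] (F : (Fin (a ++ [s]).length → Bool) → A) :
    ∑ g, F g = ∑ f, (F (extendSel f true) + F (extendSel f false)) := by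
  let e : Bool × (Fin a.length → Bool) ≃ (Fin (a ++ [s]).length → Bool) :=
    (Fin.snocEquiv fun _ => Bool).trans
      (Equiv.arrowCongr (finCongr (by simp)) (Equiv.refl Bool))
  have he : ∀ b f, e (b, f) = extendSel f b := by
    intro b f
    funext j
    simp only [e, extendSel, Fin.snocEquiv, Fin.snoc, Equiv.trans_apply, Equiv.coe_fn_mk,
      Equiv.arrowCongr_apply, Equiv.coe_refl, Function.comp_apply, finCongr_symm, finCongr_apply,
      Fin.val_cast, cast_eq, id_eq]
    rfl
  rw [← e.sum_comp, Fintype.sum_prod_type, Fintype.sum_bool, ← Finset.sum_add_distrib]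
  simp only [he]

theorem get_append_singleton_of_lt {i : ℕ} (hi : i < a.length) :
    (a ++ [s]).get ⟨i, by simp; omega⟩ = a.get ⟨i, hi⟩ := by
  simp [List.getElem_append_left hi]

theorem get_append_singleton_length : (a ++ [s]).get ⟨a.length, by simp⟩ = s := by
  simp

theorem pp_extendSel_of_le (f : Fin a.length → Bool) (b : Bool) {i : ℕ} (hi : i ≤ a.length) :
    pp cs (a ++ [s]) (extendSel f b) i = pp cs a f i := by
  induction i with
  | zero => rw [pp_zero, pp_zero]
  | succ i ih =>
    rw [pp_succ cs _ _ (by simp; omega), pp_succ cs _ _ hi, ih (by omega),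
      extendSel_apply_of_lt f b hi, get_append_singleton_of_lt hi]

theorem pp_extendSel_length_add_one (f : Fin a.length → Bool) (b : Bool) :
    pp cs (a ++ [s]) (extendSel f b) (a.length + 1) =
      sprod cs a f * if b then cs.simple s else 1 := by
  rw [pp_succ cs _ _ (by simp), pp_extendSel_of_le cs f b le_rfl, extendSel_apply_length,
    get_append_singleton_length, sprod]

theorem sprod_extendSel (f : Fin a.length → Bool) (b : Bool) :
    sprod cs (a ++ [s]) (extendSel f b) = sprod cs a f * if b then cs.simple s else 1 := by
  simp only [sprod, List.length_append, List.length_singleton, pp_extendSel_length_add_one]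

theorem distinguished_extendSel_iff (f : Fin a.length → Bool) (b : Bool) :
    Distinguished cs (a ++ [s]) (extendSel f b) ↔
      Distinguished cs a f ∧
        cs.length (sprod cs a f * if b then cs.simple s else 1) ≤
          cs.length (sprod cs a f * cs.simple s) := by
  rw [Distinguished, forall_fin_iff_of_eq_add_one List.length_append]
  refine and_congr (forall_congr' fun j => ?_) ?_
  · rw [pp_extendSel_of_le cs f b j.isLt, pp_extendSel_of_le cs f b j.isLt.le,
      get_append_singleton_of_lt j.isLt]
  · rw [pp_extendSel_length_add_one, pp_extendSel_of_le cs f b le_rfl,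
      get_append_singleton_length, sprod]

theorem skips_extendSel (f : Fin a.length → Bool) (b : Bool) :
    skips (a ++ [s]) (extendSel f b) = skips a f + if b then 0 else 1 := by
  rw [skips, card_filter_fin_of_eq_add_one List.length_append, extendSel_apply_length]
  simp only [extendSel_apply_of_lt f b (Fin.isLt _)]
  cases b <;> rfl

theorem descents_extendSel (f : Fin a.length → Bool) (b : Bool) :
    descents cs (a ++ [s]) (extendSel f b) = descents cs a f +
      if cs.length (sprod cs a f * if b then cs.simple s else 1) < cs.length (sprod cs a f)
      then 1 else 0 := by
  rw [descents, card_filter_fin_of_eq_add_one List.length_append]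
  simp only [pp_extendSel_of_le cs f b (Fin.isLt _), pp_extendSel_of_le cs f b (Fin.isLt _).le]
  rw [pp_extendSel_length_add_one, pp_extendSel_of_le cs f b le_rfl, descents, sprod]

theorem distinguishedTerm_extendSel_true (u : W) (f : Fin a.length → Bool) :
    distinguishedTerm cs (a ++ [s]) u (extendSel f true) =
      (if cs.length u < cs.length (u * cs.simple s) then X else 1) *
        distinguishedTerm cs a (u * cs.simple s) f := by
  have hu : sprod cs a f * cs.simple s = u ↔ sprod cs a f = u * cs.simple s := by
    rw [← eq_mul_inv_iff_mul_eq, cs.inv_simple]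
  simp only [distinguishedTerm, distinguished_extendSel_iff, sprod_extendSel, skips_extendSel,
    descents_extendSel, if_true, le_refl, and_true, add_zero, hu]
  by_cases h : Distinguished cs a f ∧ sprod cs a f = u * cs.simple s
  · rw [if_pos h, if_pos h, h.2, cs.simple_mul_simple_cancel_right]
    split_ifs <;> ring
  · rw [if_neg h, if_neg h, mul_zero]

theorem distinguishedTerm_extendSel_false (u : W) (f : Fin a.length → Bool) :
    distinguishedTerm cs (a ++ [s]) u (extendSel f false) =
      (if cs.length u ≤ cs.length (u * cs.simple s) then X - 1 else 0) *
        distinguishedTerm cs a u f := by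
  simp only [distinguishedTerm, distinguished_extendSel_iff, sprod_extendSel, skips_extendSel,
    descents_extendSel, Bool.false_eq_true, if_false, mul_one, lt_self_iff_false, add_zero]
  by_cases h : Distinguished cs a f ∧ sprod cs a f = u
  · rw [if_pos h, h.2]
    simp only [h.1, true_and, and_true]
    split_ifs <;> ring
  · rw [if_neg fun h' => h ⟨h'.1.1, h'.2⟩, if_neg h, mul_zero]

theorem distinguishedSum_append_singleton (u : W) :
    distinguishedSum cs (a ++ [s]) u =
      (if cs.length u < cs.length (u * cs.simple s) then X else 1) *
          distinguishedSum cs a (u * cs.simple s) +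
        (if cs.length u ≤ cs.length (u * cs.simple s) then X - 1 else 0) *
          distinguishedSum cs a u := by
  simp only [distinguishedSum, sum_extendSel, Finset.sum_add_distrib, Finset.mul_sum,
    distinguishedTerm_extendSel_true, distinguishedTerm_extendSel_false]

end extendSel

theorem rpol_nil (u : W) : Rpol cs [] u = if u = 1 then 1 else 0 := rfl

theorem rpol_append_singleton (a : List B) (s : B) (u : W) :
    Rpol cs (a ++ [s]) u =
      if cs.length (u * cs.simple s) < cs.length u then Rpol cs a (u * cs.simple s)
      else X * Rpol cs a (u * cs.simple s) + (X - 1) * Rpol cs a u := by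
  simp [Rpol, Raux]

theorem rpol_eq_distinguishedSum (w : List B) (u : W) : Rpol cs w u = distinguishedSum cs w u := by
  induction w using List.reverseRecOn generalizing u with
  | nil => rw [rpol_nil, distinguishedSum_nil]
  | append_singleton a s ih =>
    rw [rpol_append_singleton, distinguishedSum_append_singleton, ih, ih]
    rcases (cs.length_mul_simple_ne u s).lt_or_gt with h | h
    · simp [h, h.not_gt, h.not_ge]
    · simp [h, h.le, h.not_gt]

end Deodhar

open Deodhar in
theorem rpol_eq_sum_over_distinguished_subwords_general
    {B : Type*} {W : Type*} [Group W] {M : CoxeterMatrix B}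
    (cs : CoxeterSystem M W) (w : List B) (u : W) :
    Rpol cs w u =
      ∑ f ∈ Finset.univ.filter (fun f : Fin w.length → Bool =>
          Distinguished cs w f ∧ sprod cs w f = u),
        (Polynomial.X - 1) ^ skips w f * Polynomial.X ^ descents cs w f := by
  rw [Finset.sum_filter]
  exact rpol_eq_distinguishedSum cs w u

open Deodhar in
/-- For every word `w` and every `u ∈ W`,
`R_{u,w}(q) = Σ_{u ∈ D_{u,w}} (q-1)^{e_u} q^{d_u}`, the sum being over all distinguished
`u`-subwords of `w`, where `e_u` is the number of skips and `d_u = #{i : u_(i) < u_(i-1)}`. -/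
theorem rpol_eq_sum_over_distinguished_subwords
    {B : Type*} {W : Type*} [Group W] [Finite W] {M : CoxeterMatrix B}
    (cs : CoxeterSystem M W) (w : List B) (u : W) :
    Rpol cs w u =
      ∑ f ∈ Finset.univ.filter (fun f : Fin w.length → Bool =>
          Distinguished cs w f ∧ sprod cs w f = u),
        (Polynomial.X - 1) ^ skips w f * Polynomial.X ^ descents cs w f :=
  rpol_eq_sum_over_distinguished_subwords_general cs w u
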